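/- arXiv:1504.08264 — 3 statements merged into one kernel-verified Lean document; each statement's English description precedes it below -/
import Mathlib

section
/- Let c ∈ (-1,1) and let G1, G2 be independent standard Gaussian random variables; set X = G1 and Y = c·G1 + √(1-c²)·G2. Then for every λ = (λ1,λ2,λ3) ∈ ℝ³ with λ ∉ D_c, the expectation E[exp(λ1·X² + λ2·Y² + λ3·X·Y)] is infinite (the integral of exp(λ1x² + λ2y² + λ3xy) against the law of (X,Y) equals +∞). -/
open MeasureTheory ProbabilityTheory Real

noncomputable section

/-- The domain `D_c` of the log-moment generating function. -/
def Dc (c l1 l2 l3 : ℝ) : Prop :=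
  max l1 l2 < 1 / (2 * (1 - c ^ 2)) ∧
    (l3 * (1 - c ^ 2) + c) ^ 2 < (1 - 2 * l1 * (1 - c ^ 2)) * (1 - 2 * l2 * (1 - c ^ 2))

open scoped ENNReal NNReal

/-!
By independence, the expectation is an integral over `ℝ²` against the standard Gaussian density.
Substituting `X = u`, `Y = c u + √(1 - c²) v`, the integrand becomes `exp (-Q(u, v) / 2) / (2π)`
for a quadratic form `Q = A u² + B u v + C v²`, and up to the positive factor `1 - c²` the
inequalities defining `D_c` say exactly that `Q` is positive definite. If `C ≤ 0`, every inner
integral in `v` diverges. Otherwise `B² ≥ 4 A C`, and completing the square gives `Q ≤ C` on the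
strip `|v + B u / (2 C)| ≤ 1`, so every inner integral is bounded below by the same positive
constant and the outer integral over `u ∈ ℝ` diverges.
-/

section LowerBound

variable {α : Type*} [MeasurableSpace α] {μ : Measure α} {f : α → ℝ≥0∞} {s : Set α} {ε : ℝ≥0∞}

theorem mul_measure_le_lintegral_of_forall_le (hs : MeasurableSet s) (hf : ∀ x ∈ s, ε ≤ f x) :
    ε * μ s ≤ ∫⁻ x, f x ∂μ :=
  calc ε * μ s = ∫⁻ _ in s, ε ∂μ := (setLIntegral_const s ε).symm
    _ ≤ ∫⁻ x in s, f x ∂μ := setLIntegral_mono' hs hf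
    _ ≤ ∫⁻ x, f x ∂μ := setLIntegral_le_lintegral s f

theorem lintegral_eq_top_of_forall_le (hs : MeasurableSet s) (hμs : μ s = ∞) (hε : ε ≠ 0)
    (hf : ∀ x ∈ s, ε ≤ f x) : ∫⁻ x, f x ∂μ = ∞ :=
  top_unique <| (mul_measure_le_lintegral_of_forall_le hs hf).trans'
    (by rw [hμs, ENNReal.mul_top hε])

end LowerBound

theorem lintegral_ofReal_exp_mul_add_eq_top (b k : ℝ) :
    ∫⁻ v : ℝ, ENNReal.ofReal (exp (b * v + k)) = ∞ := by
  have hk : ENNReal.ofReal (exp k) ≠ 0 := (ENNReal.ofReal_pos.2 (exp_pos k)).ne'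
  have hle : ∀ v, 0 ≤ b * v → ENNReal.ofReal (exp k) ≤ ENNReal.ofReal (exp (b * v + k)) :=
    fun v hv => ENNReal.ofReal_le_ofReal (exp_le_exp.2 (by linarith))
  rcases le_or_gt 0 b with hb | hb
  · exact lintegral_eq_top_of_forall_le measurableSet_Ici volume_Ici hk
      fun v hv => hle v (mul_nonneg hb hv)
  · exact lintegral_eq_top_of_forall_le measurableSet_Iic volume_Iic hk
      fun v hv => hle v (mul_nonneg_of_nonpos_of_nonpos hb.le hv)

section QuadraticForm

variable {A B C K : ℝ}

theorem lintegral_ofReal_exp_neg_quadratic_eq_top_of_nonpos (hC : C ≤ 0) (u : ℝ) :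
    ∫⁻ v, ENNReal.ofReal (exp (-(A * u ^ 2 + B * (u * v) + C * v ^ 2) / 2 - K)) = ∞ := by
  refine top_unique <| (lintegral_ofReal_exp_mul_add_eq_top (-(B * u) / 2) (-(A * u ^ 2) / 2 - K)
    ).symm.trans_le <| lintegral_mono fun v => ENNReal.ofReal_le_ofReal (exp_le_exp.2 ?_)
  nlinarith [mul_nonpos_of_nonpos_of_nonneg hC (sq_nonneg v)]

theorem ofReal_two_mul_exp_le_lintegral_ofReal_exp_neg_quadratic (hC : 0 < C)
    (hdisc : 4 * A * C ≤ B ^ 2) (u : ℝ) :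
    ENNReal.ofReal (2 * exp (-C / 2 - K)) ≤
      ∫⁻ v, ENNReal.ofReal (exp (-(A * u ^ 2 + B * (u * v) + C * v ^ 2) / 2 - K)) := by
  set m := B * u / (2 * C)
  have hstrip : ∀ v ∈ Set.Icc (-m - 1) (-m + 1),
      A * u ^ 2 + B * (u * v) + C * v ^ 2 ≤ C := by
    intro v ⟨hv₁, hv₂⟩
    have hsquare : A * u ^ 2 + B * (u * v) + C * v ^ 2
        = C * (v + m) ^ 2 + (A - B ^ 2 / (4 * C)) * u ^ 2 := by
      simp only [m]; field_simp; ring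
    have hcoef : A - B ^ 2 / (4 * C) ≤ 0 := by
      rw [sub_nonpos, le_div_iff₀ (by positivity)]; linarith
    have hv : (v + m) ^ 2 ≤ 1 := by nlinarith
    nlinarith [mul_nonpos_of_nonpos_of_nonneg hcoef (sq_nonneg u)]
  calc ENNReal.ofReal (2 * exp (-C / 2 - K))
      = ENNReal.ofReal (exp (-C / 2 - K)) * volume (Set.Icc (-m - 1) (-m + 1)) := by
        rw [volume_Icc, ← ENNReal.ofReal_mul (exp_nonneg _), mul_comm]; ring_nf
    _ ≤ _ := mul_measure_le_lintegral_of_forall_le measurableSet_Icc fun v hv =>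
        ENNReal.ofReal_le_ofReal (exp_le_exp.2 (by linarith [hstrip v hv]))

theorem lintegral_lintegral_ofReal_exp_neg_quadratic_eq_top (h : ¬(0 < C ∧ B ^ 2 < 4 * A * C)) :
    ∫⁻ u, ∫⁻ v, ENNReal.ofReal (exp (-(A * u ^ 2 + B * (u * v) + C * v ^ 2) / 2 - K)) = ∞ := by
  rcases le_or_gt C 0 with hC | hC
  · simp_rw [lintegral_ofReal_exp_neg_quadratic_eq_top_of_nonpos hC]
    simp
  · have hdisc : 4 * A * C ≤ B ^ 2 := not_lt.1 fun hlt => h ⟨hC, hlt⟩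
    exact lintegral_eq_top_of_forall_le MeasurableSet.univ volume_univ
      (ENNReal.ofReal_pos.2 (by positivity)).ne' fun u _ =>
        ofReal_two_mul_exp_le_lintegral_ofReal_exp_neg_quadratic hC hdisc u

end QuadraticForm

theorem dc_of_posDef {c l1 l2 l3 : ℝ} (hw : 0 < 1 - c ^ 2) (hC : 0 < 1 - 2 * l2 * (1 - c ^ 2))
    (hdet : (1 - c ^ 2) * (2 * l2 * c + l3) ^ 2
      < (1 - 2 * (l1 + l2 * c ^ 2 + l3 * c)) * (1 - 2 * l2 * (1 - c ^ 2))) :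
    Dc c l1 l2 l3 := by
  have hdiff :
      (1 - 2 * l1 * (1 - c ^ 2)) * (1 - 2 * l2 * (1 - c ^ 2)) - (l3 * (1 - c ^ 2) + c) ^ 2 =
        (1 - c ^ 2) * ((1 - 2 * (l1 + l2 * c ^ 2 + l3 * c)) * (1 - 2 * l2 * (1 - c ^ 2))
          - (1 - c ^ 2) * (2 * l2 * c + l3) ^ 2) := by
    ring
  have hsq :
      (l3 * (1 - c ^ 2) + c) ^ 2 < (1 - 2 * l1 * (1 - c ^ 2)) * (1 - 2 * l2 * (1 - c ^ 2)) := by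
    rw [← sub_pos, hdiff]
    exact mul_pos hw (by linarith)
  have hl1 : 0 < 1 - 2 * l1 * (1 - c ^ 2) := pos_of_mul_pos_left
    ((sq_nonneg _).trans_lt hsq) hC.le
  refine ⟨max_lt ?_ ?_, hsq⟩ <;> rw [lt_div_iff₀ (by positivity)] <;> linarith

theorem ProbabilityTheory.IndepFun.lintegral_comp_eq_lintegral_prod {Ω α β : Type*}
    [MeasurableSpace Ω] [MeasurableSpace α] [MeasurableSpace β] {P : Measure Ω}
    {X : Ω → α} {Y : Ω → β} {μ : Measure α} {ν : Measure β} [SigmaFinite μ] [SigmaFinite ν]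
    (hXY : IndepFun X Y P) (hX : Measurable X) (hY : Measurable Y)
    (hXμ : P.map X = μ) (hYν : P.map Y = ν) {g : α × β → ℝ≥0∞} (hg : Measurable g) :
    ∫⁻ ω, g (X ω, Y ω) ∂P = ∫⁻ p, g p ∂(μ.prod ν) := by
  subst hXμ hYν
  rw [← (indepFun_iff_map_prod_eq_prod_map_map' hX.aemeasurable hY.aemeasurable
    inferInstance inferInstance).1 hXY, lintegral_map hg (hX.prodMk hY)]

theorem lintegral_gaussianReal_prod_eq (m₁ m₂ : ℝ) {v₁ v₂ : ℝ≥0} (hv₁ : v₁ ≠ 0) (hv₂ : v₂ ≠ 0)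
    {g : ℝ × ℝ → ℝ≥0∞} (hg : Measurable g) :
    ∫⁻ p, g p ∂(gaussianReal m₁ v₁).prod (gaussianReal m₂ v₂) =
      ∫⁻ u, ∫⁻ v, gaussianPDF m₁ v₁ u * gaussianPDF m₂ v₂ v * g (u, v) := by
  rw [gaussianReal_of_var_ne_zero _ hv₁, gaussianReal_of_var_ne_zero _ hv₂,
    prod_withDensity (measurable_gaussianPDF _ _) (measurable_gaussianPDF _ _),
    lintegral_withDensity_eq_lintegral_mul _ (by fun_prop) hg,
    lintegral_prod _ (by fun_prop)]
  rfl

theorem gaussianPDF_mul_gaussianPDF_mul_ofReal_exp (u v t : ℝ) :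
    gaussianPDF 0 1 u * gaussianPDF 0 1 v * ENNReal.ofReal (exp t) =
      ENNReal.ofReal (exp (t - (u ^ 2 + v ^ 2) / 2 - log (2 * π))) := by
  have hπ : 0 < 2 * π := by positivity
  simp only [gaussianPDF, gaussianPDFReal, NNReal.coe_one, mul_one, sub_zero]
  rw [← ENNReal.ofReal_mul (by positivity), ← ENNReal.ofReal_mul (by positivity)]
  congr 1
  have hnorm : (√(2 * π))⁻¹ * (√(2 * π))⁻¹ = exp (-log (2 * π)) := by
    rw [exp_neg, exp_log hπ, ← mul_inv, mul_self_sqrt hπ.le]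
  rw [show t - (u ^ 2 + v ^ 2) / 2 - log (2 * π) = -u ^ 2 / 2 + -v ^ 2 / 2 + t + -log (2 * π) by
    ring, exp_add, exp_add, exp_add, ← hnorm]
  ring

theorem exp_moment_bivariate_gaussian_eq_top_of_not_mem_general
    {Ω : Type*} [MeasurableSpace Ω] (P : Measure Ω)
    (G1 G2 : Ω → ℝ) (hmG1 : Measurable G1) (hmG2 : Measurable G2)
    (hG1 : Measure.map G1 P = gaussianReal 0 1)
    (hG2 : Measure.map G2 P = gaussianReal 0 1)
    (hindep : IndepFun G1 G2 P)
    (c : ℝ) (hc : c ∈ Set.Ioo (-1 : ℝ) 1)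
    (X Y : Ω → ℝ) (hX : X = G1)
    (hY : Y = fun ω => c * G1 ω + Real.sqrt (1 - c ^ 2) * G2 ω)
    (l1 l2 l3 : ℝ) (hl : ¬ Dc c l1 l2 l3) :
    ∫⁻ ω, ENNReal.ofReal
        (Real.exp (l1 * (X ω) ^ 2 + l2 * (Y ω) ^ 2 + l3 * (X ω * Y ω))) ∂P = ⊤ := by
  subst hX hY
  beta_reduce
  have hw : 0 < 1 - c ^ 2 := by nlinarith [hc.1, hc.2]
  set s := √(1 - c ^ 2)
  have hs : s ^ 2 = 1 - c ^ 2 := sq_sqrt hw.le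
  rw [hindep.lintegral_comp_eq_lintegral_prod hmG1 hmG2 hG1 hG2 (g := fun p => ENNReal.ofReal
      (exp (l1 * p.1 ^ 2 + l2 * (c * p.1 + s * p.2) ^ 2 + l3 * (p.1 * (c * p.1 + s * p.2)))))
      (by fun_prop), lintegral_gaussianReal_prod_eq 0 0 one_ne_zero one_ne_zero (by fun_prop)]
  simp_rw [gaussianPDF_mul_gaussianPDF_mul_ofReal_exp]
  set A := 1 - 2 * (l1 + l2 * c ^ 2 + l3 * c)
  set B := -2 * s * (2 * l2 * c + l3)
  set C := 1 - 2 * l2 * (1 - c ^ 2)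
  have hQ : ∀ u v : ℝ, l1 * u ^ 2 + l2 * (c * u + s * v) ^ 2 + l3 * (u * (c * u + s * v))
      - (u ^ 2 + v ^ 2) / 2 = -(A * u ^ 2 + B * (u * v) + C * v ^ 2) / 2 := by
    intro u v; linear_combination (l2 * v ^ 2) * hs
  simp_rw [hQ]
  exact lintegral_lintegral_ofReal_exp_neg_quadratic_eq_top fun ⟨hC, hdet⟩ =>
    hl (dc_of_posDef hw hC (by linear_combination (hdet - 4 * (2 * l2 * c + l3) ^ 2 * hs) / 4))

/-- For a centered bivariate Gaussian vector `(X, Y)` with unit variances and correlation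
`c ∈ (-1,1)`, built as `X = G₁`, `Y = c G₁ + √(1-c²) G₂` from independent standard Gaussians,
and any `λ = (λ₁, λ₂, λ₃) ∉ D_c`, the exponential moment
`E[exp(λ₁ X² + λ₂ Y² + λ₃ X Y)]` is infinite. -/
theorem exp_moment_bivariate_gaussian_eq_top_of_not_mem
    {Ω : Type*} [MeasurableSpace Ω] (P : Measure Ω) [IsProbabilityMeasure P]
    (G1 G2 : Ω → ℝ) (hmG1 : Measurable G1) (hmG2 : Measurable G2)
    (hG1 : Measure.map G1 P = gaussianReal 0 1)
    (hG2 : Measure.map G2 P = gaussianReal 0 1)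
    (hindep : IndepFun G1 G2 P)
    (c : ℝ) (hc : c ∈ Set.Ioo (-1 : ℝ) 1)
    (X Y : Ω → ℝ) (hX : X = G1)
    (hY : Y = fun ω => c * G1 ω + Real.sqrt (1 - c ^ 2) * G2 ω)
    (l1 l2 l3 : ℝ) (hl : ¬ Dc c l1 l2 l3) :
    ∫⁻ ω, ENNReal.ofReal
        (Real.exp (l1 * (X ω) ^ 2 + l2 * (Y ω) ^ 2 + l3 * (X ω * Y ω))) ∂P = ⊤ :=
  exp_moment_bivariate_gaussian_eq_top_of_not_mem_general P G1 G2 hmG1 hmG2 hG1 hG2 hindep c hc X Y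
    hX hY l1 l2 l3 hl
end
end

section
/- Let c ∈ (-1,1) and let x = (x1,x2,x3) ∈ ℝ³ satisfy x1 > 0, x2 > 0 and x1·x2 > x3². Then the Legendre transform of P_c at x is given by the explicit formula sup_{λ ∈ D_c} ( λ1·x1 + λ2·x2 + λ3·x3 - P_c(λ) ) = log( √(1-c²) / √(x1·x2 - x3²) ) - 1 + (x1 + x2 - 2c·x3)/(2(1-c²)) = P*_c(x). -/
open MeasureTheory Real

noncomputable section

/-- The function `P_c` on its domain `D_c`. -/
def Pc (c l1 l2 l3 : ℝ) : ℝ :=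
  -(1 / 2) * Real.log
    (((1 - 2 * l1 * (1 - c ^ 2)) * (1 - 2 * l2 * (1 - c ^ 2)) -
        (l3 * (1 - c ^ 2) + c) ^ 2) / (1 - c ^ 2))

/-! With `s = 1 - c²`, `a = 1 - 2 λ₁ s`, `b = 1 - 2 λ₂ s`, `d = λ₃ s + c`, `A = [[a, d], [d, b]]` and
`X = [[x₁, -x₃], [-x₃, x₂]]`, the objective `⟨λ, x⟩ - P_c(λ)` equals
`(x₁ + x₂ - 2 c x₃)/(2s) + ½ log (det A / s) - tr (A X)/(2s)`, and `D_c` is the set where `A` is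
positive definite. Since `tr (A X) ≥ 2 √(det A · det X)` and `log t ≤ t - 1`, the objective is at
most `P*_c(x)`, with equality at `A = s X⁻¹`. -/

def PcStar (c x1 x2 x3 : ℝ) : ℝ :=
  Real.log (Real.sqrt (1 - c ^ 2) / Real.sqrt (x1 * x2 - x3 ^ 2)) - 1
    + (x1 + x2 - 2 * c * x3) / (2 * (1 - c ^ 2))

lemma PcStar_eq_half_log {c x1 x2 x3 : ℝ} (hs : 0 ≤ 1 - c ^ 2) (hm : 0 ≤ x1 * x2 - x3 ^ 2) :
    PcStar c x1 x2 x3 = (x1 + x2 - 2 * c * x3) / (2 * (1 - c ^ 2))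
      + (Real.log ((1 - c ^ 2) / (x1 * x2 - x3 ^ 2)) / 2 - 1) := by
  rw [PcStar, ← Real.sqrt_div hs, Real.log_sqrt (div_nonneg hs hm)]
  ring

lemma two_mul_sqrt_det_mul_det_le {a b d x y z : ℝ} (ha : 0 ≤ a) (hb : 0 ≤ b) (hx : 0 ≤ x)
    (hy : 0 ≤ y) (hd : d ^ 2 ≤ a * b) (hz : z ^ 2 ≤ x * y) :
    2 * Real.sqrt ((a * b - d ^ 2) * (x * y - z ^ 2)) ≤ a * x + b * y - 2 * (d * z) := by
  set p := Real.sqrt (a * b - d ^ 2)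
  set q := Real.sqrt (x * y - z ^ 2)
  have hp : p ^ 2 = a * b - d ^ 2 := Real.sq_sqrt (by linarith)
  have hq : q ^ 2 = x * y - z ^ 2 := Real.sq_sqrt (by linarith)
  have hcs : (d * z + p * q) ^ 2 ≤ (a * x) * (b * y) := by
    nlinarith [sq_nonneg (d * q - z * p)]
  have hamgm : 2 * Real.sqrt ((a * x) * (b * y)) ≤ a * x + b * y := by
    rw [Real.sqrt_mul (by positivity)]
    nlinarith [Real.sq_sqrt (mul_nonneg ha hx), Real.sq_sqrt (mul_nonneg hb hy),
      sq_nonneg (Real.sqrt (a * x) - Real.sqrt (b * y))]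
  rw [Real.sqrt_mul (sub_nonneg.2 hd)]
  linarith [(le_abs_self _).trans (Real.abs_le_sqrt hcs)]

lemma half_log_div_sub_le {s D m T : ℝ} (hs : 0 < s) (hD : 0 < D) (hm : 0 < m)
    (hT : 2 * Real.sqrt (D * m) ≤ T) :
    Real.log (D / s) / 2 - T / (2 * s) ≤ Real.log (s / m) / 2 - 1 := by
  have hlog : Real.log (Real.sqrt (D * m) / s)
      = Real.log (D / s) / 2 - Real.log (s / m) / 2 := by
    rw [Real.log_div (by positivity) hs.ne', Real.log_sqrt (by positivity),
      Real.log_mul hD.ne' hm.ne', Real.log_div hD.ne' hs.ne', Real.log_div hs.ne' hm.ne']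
    ring
  have hle : Real.sqrt (D * m) / s ≤ T / (2 * s) := by
    rw [div_le_div_iff₀ hs (by positivity)]
    nlinarith
  linarith [Real.log_le_sub_one_of_pos (show 0 < Real.sqrt (D * m) / s by positivity)]

lemma Dc_iff {c l1 l2 l3 : ℝ} (hs : 0 < 1 - c ^ 2) :
    Dc c l1 l2 l3 ↔ 0 < 1 - 2 * l1 * (1 - c ^ 2) ∧ 0 < 1 - 2 * l2 * (1 - c ^ 2) ∧
      (l3 * (1 - c ^ 2) + c) ^ 2 < (1 - 2 * l1 * (1 - c ^ 2)) * (1 - 2 * l2 * (1 - c ^ 2)) := by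
  have key (l : ℝ) : l < 1 / (2 * (1 - c ^ 2)) ↔ 0 < 1 - 2 * l * (1 - c ^ 2) := by
    rw [lt_div_iff₀ (by positivity)]
    constructor <;> intro h <;> linarith
  rw [Dc, max_lt_iff, key, key, and_assoc]

lemma linear_sub_Pc_eq {c l1 l2 l3 a b d : ℝ} (x1 x2 x3 : ℝ) (hs : 1 - c ^ 2 ≠ 0)
    (ha : a = 1 - 2 * l1 * (1 - c ^ 2)) (hb : b = 1 - 2 * l2 * (1 - c ^ 2))
    (hd : d = l3 * (1 - c ^ 2) + c) :
    l1 * x1 + l2 * x2 + l3 * x3 - Pc c l1 l2 l3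
      = (x1 + x2 - 2 * c * x3) / (2 * (1 - c ^ 2))
        + (Real.log ((a * b - d ^ 2) / (1 - c ^ 2)) / 2
          - (a * x1 + b * x2 - 2 * (d * x3)) / (2 * (1 - c ^ 2))) := by
  subst ha hb hd
  rw [Pc]
  field_simp
  ring

lemma linear_sub_Pc_le_PcStar {c l1 l2 l3 x1 x2 x3 : ℝ} (hs : 0 < 1 - c ^ 2) (hx1 : 0 ≤ x1)
    (hx2 : 0 ≤ x2) (hm : 0 < x1 * x2 - x3 ^ 2) (hl : Dc c l1 l2 l3) :
    l1 * x1 + l2 * x2 + l3 * x3 - Pc c l1 l2 l3 ≤ PcStar c x1 x2 x3 := by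
  obtain ⟨ha, hb, hdet⟩ := (Dc_iff hs).1 hl
  rw [linear_sub_Pc_eq x1 x2 x3 hs.ne' rfl rfl rfl, PcStar_eq_half_log hs.le hm.le,
    add_le_add_iff_left]
  exact half_log_div_sub_le hs (by linarith) hm
    (two_mul_sqrt_det_mul_det_le ha.le hb.le hx1 hx2 hdet.le (by linarith))

def PcArgmax (c x1 x2 x3 : ℝ) : ℝ × ℝ × ℝ :=
  (1 / (2 * (1 - c ^ 2)) - x2 / (2 * (x1 * x2 - x3 ^ 2)),
    1 / (2 * (1 - c ^ 2)) - x1 / (2 * (x1 * x2 - x3 ^ 2)),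
    x3 / (x1 * x2 - x3 ^ 2) - c / (1 - c ^ 2))

lemma PcArgmax_coords {c x1 x2 x3 : ℝ} (hs : 1 - c ^ 2 ≠ 0) (hm : x1 * x2 - x3 ^ 2 ≠ 0) :
    1 - 2 * (PcArgmax c x1 x2 x3).1 * (1 - c ^ 2) = (1 - c ^ 2) * x2 / (x1 * x2 - x3 ^ 2) ∧
    1 - 2 * (PcArgmax c x1 x2 x3).2.1 * (1 - c ^ 2) = (1 - c ^ 2) * x1 / (x1 * x2 - x3 ^ 2) ∧
    (PcArgmax c x1 x2 x3).2.2 * (1 - c ^ 2) + c = (1 - c ^ 2) * x3 / (x1 * x2 - x3 ^ 2) := by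
  simp only [PcArgmax]
  refine ⟨?_, ?_, ?_⟩ <;> field_simp <;> ring

lemma Dc_PcArgmax {c x1 x2 x3 : ℝ} (hs : 0 < 1 - c ^ 2) (hx1 : 0 < x1) (hx2 : 0 < x2)
    (hm : 0 < x1 * x2 - x3 ^ 2) :
    Dc c (PcArgmax c x1 x2 x3).1 (PcArgmax c x1 x2 x3).2.1 (PcArgmax c x1 x2 x3).2.2 := by
  obtain ⟨ha, hb, hd⟩ := PcArgmax_coords (x1 := x1) (x2 := x2) (x3 := x3) hs.ne' hm.ne'
  rw [Dc_iff hs, ha, hb, hd]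
  have hdet : (1 - c ^ 2) * x2 / (x1 * x2 - x3 ^ 2) * ((1 - c ^ 2) * x1 / (x1 * x2 - x3 ^ 2))
      - ((1 - c ^ 2) * x3 / (x1 * x2 - x3 ^ 2)) ^ 2 = (1 - c ^ 2) ^ 2 / (x1 * x2 - x3 ^ 2) := by
    field_simp [hm.ne']
  exact ⟨by positivity, by positivity, sub_pos.1 (hdet ▸ by positivity)⟩

lemma linear_sub_Pc_PcArgmax {c x1 x2 x3 : ℝ} (hs : 0 < 1 - c ^ 2) (hm : 0 < x1 * x2 - x3 ^ 2) :
    (PcArgmax c x1 x2 x3).1 * x1 + (PcArgmax c x1 x2 x3).2.1 * x2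
        + (PcArgmax c x1 x2 x3).2.2 * x3
        - Pc c (PcArgmax c x1 x2 x3).1 (PcArgmax c x1 x2 x3).2.1 (PcArgmax c x1 x2 x3).2.2
      = PcStar c x1 x2 x3 := by
  obtain ⟨ha, hb, hd⟩ := PcArgmax_coords (x1 := x1) (x2 := x2) (x3 := x3) hs.ne' hm.ne'
  rw [linear_sub_Pc_eq x1 x2 x3 hs.ne' ha.symm hb.symm hd.symm, PcStar_eq_half_log hs.le hm.le]
  congr 2
  · field_simp
  · rw [div_eq_one_iff_eq (by positivity), ← mul_one (2 * (1 - c ^ 2)), ← div_self hm.ne']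
    ring

/-- For `c ∈ (-1,1)` and `x = (x₁,x₂,x₃)` with `x₁ > 0`, `x₂ > 0`, `x₁ x₂ > x₃²`, the
Legendre transform of `P_c` at `x`, i.e. `sup_{λ ∈ D_c} (⟨λ,x⟩ - P_c(λ))`, equals
`log(√(1-c²)/√(x₁x₂ - x₃²)) - 1 + (x₁ + x₂ - 2 c x₃)/(2(1-c²))`. -/
theorem legendre_transform_Pc_of_mem
    (c : ℝ) (hc : c ∈ Set.Ioo (-1 : ℝ) 1)
    (x1 x2 x3 : ℝ) (hx1 : 0 < x1) (hx2 : 0 < x2) (hx3 : x3 ^ 2 < x1 * x2) :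
    (⨆ l ∈ {l : ℝ × ℝ × ℝ | Dc c l.1 l.2.1 l.2.2},
        ((l.1 * x1 + l.2.1 * x2 + l.2.2 * x3 - Pc c l.1 l.2.1 l.2.2 : ℝ) : EReal))
      = ((Real.log (Real.sqrt (1 - c ^ 2) / Real.sqrt (x1 * x2 - x3 ^ 2)) - 1
          + (x1 + x2 - 2 * c * x3) / (2 * (1 - c ^ 2)) : ℝ) : EReal) := by
  show _ = ((PcStar c x1 x2 x3 : ℝ) : EReal)
  have hs : 0 < 1 - c ^ 2 := by nlinarith [hc.1, hc.2]
  have hm : 0 < x1 * x2 - x3 ^ 2 := sub_pos.2 hx3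
  refine le_antisymm (iSup₂_le fun l hl => ?_) ?_
  · exact EReal.coe_le_coe_iff.2 (linear_sub_Pc_le_PcStar hs hx1.le hx2.le hm hl)
  · rw [← linear_sub_Pc_PcArgmax hs hm]
    exact le_iSup₂_of_le (f := fun (l : ℝ × ℝ × ℝ) _ =>
      ((l.1 * x1 + l.2.1 * x2 + l.2.2 * x3 - Pc c l.1 l.2.1 l.2.2 : ℝ) : EReal))
      (PcArgmax c x1 x2 x3) (Dc_PcArgmax hs hx1 hx2 hm) le_rfl
end
end

section
/- Let c ∈ (-1,1) and let x = (x1,x2,x3) ∈ ℝ³ be such that the conditions x1 > 0, x2 > 0 and x1·x2 > x3² do NOT all hold. Then the Legendre transform of P_c at x is infinite: sup_{λ ∈ D_c} ( λ1·x1 + λ2·x2 + λ3·x3 - P_c(λ) ) = +∞, in agreement with the convention P*_c(x) = +∞ outside the domain {x1 > 0, x2 > 0, x1·x2 > x3²}. -/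
/-!
Substitute `A = 1 - 2λ₁(1-c²)`, `B = 1 - 2λ₂(1-c²)`, `D = λ₃(1-c²) + c`: then `D_c` becomes the
cone of positive definite matrices `Q = [[A, D], [D, B]]`, `P_c = -½ log (det Q / (1-c²))`, and
`⟨λ, x⟩` is a constant minus `⟨Q, X⟩ / (2(1-c²))` with `X = [[x₁, -x₃], [-x₃, x₂]]`.
If `X` is not positive definite, some `v ≠ 0` has `vᵀXv ≤ 0`; along the ray `Q = I + t vvᵀ` the
pairing `⟨Q, X⟩` stays bounded above while `det Q = 1 + t‖v‖²` tends to infinity.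
-/

open MeasureTheory Real

noncomputable section

open Filter

theorem EReal.iSup_mem_coe_eq_top_of_tendsto {α ι : Type*} {S : Set α} {f : α → ℝ}
    {l : Filter ι} [l.NeBot] (γ : ι → α) (hγ : ∀ᶠ i in l, γ i ∈ S)
    (hf : Tendsto (f ∘ γ) l atTop) :
    ⨆ a ∈ S, (f a : EReal) = ⊤ := by
  refine iSup₂_eq_top _ |>.mpr fun b hb => ?_
  obtain ⟨M, hbM, -⟩ := EReal.exists_between_coe_real hb
  obtain ⟨i, hiM, hiS⟩ := ((hf.eventually_gt_atTop M).and hγ).exists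
  exact ⟨γ i, hiS, hbM.trans (EReal.coe_lt_coe_iff.mpr hiM)⟩

theorem exists_ne_zero_quadForm_nonpos {x1 x2 x3 : ℝ}
    (hx : ¬ (0 < x1 ∧ 0 < x2 ∧ x3 ^ 2 < x1 * x2)) :
    ∃ p q : ℝ, 0 < p ^ 2 + q ^ 2 ∧ x1 * p ^ 2 + x2 * q ^ 2 - 2 * x3 * p * q ≤ 0 := by
  by_cases hx1 : 0 < x1
  · by_cases hx2 : 0 < x2
    · have hdet : x1 * x2 ≤ x3 ^ 2 := not_lt.mp fun h => hx ⟨hx1, hx2, h⟩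
      -- the value at `(x₃, x₁)` is `x₁ (x₁ x₂ - x₃²)`
      exact ⟨x3, x1, by positivity, by nlinarith⟩
    · exact ⟨0, 1, by norm_num, by linarith⟩
  · exact ⟨1, 0, by norm_num, by linarith⟩

section Reparametrization

variable {c A B D : ℝ}

def lambdaOfEntries (c A B D : ℝ) : ℝ × ℝ × ℝ :=
  ((1 - A) / (2 * (1 - c ^ 2)), (1 - B) / (2 * (1 - c ^ 2)), (D - c) / (1 - c ^ 2))

theorem one_sub_sq_pos_of_mem_Ioo (hc : c ∈ Set.Ioo (-1 : ℝ) 1) : 0 < 1 - c ^ 2 := by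
  nlinarith [hc.1, hc.2]

theorem entries_lambdaOfEntries (hs : 0 < 1 - c ^ 2) :
    1 - 2 * (lambdaOfEntries c A B D).1 * (1 - c ^ 2) = A ∧
      1 - 2 * (lambdaOfEntries c A B D).2.1 * (1 - c ^ 2) = B ∧
      (lambdaOfEntries c A B D).2.2 * (1 - c ^ 2) + c = D := by
  simp only [lambdaOfEntries]
  refine ⟨?_, ?_, ?_⟩ <;> field_simp <;> ring

theorem dc_lambdaOfEntries (hs : 0 < 1 - c ^ 2) (hA : 0 < A) (hB : 0 < B) (hD : D ^ 2 < A * B) :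
    Dc c (lambdaOfEntries c A B D).1 (lambdaOfEntries c A B D).2.1
      (lambdaOfEntries c A B D).2.2 := by
  obtain ⟨hA', hB', hD'⟩ := entries_lambdaOfEntries (A := A) (B := B) (D := D) hs
  refine ⟨max_lt ?_ ?_, by rwa [hA', hB', hD']⟩ <;>
    simp only [lambdaOfEntries] <;> gcongr <;> linarith

theorem pc_lambdaOfEntries (hs : 0 < 1 - c ^ 2) :
    Pc c (lambdaOfEntries c A B D).1 (lambdaOfEntries c A B D).2.1
        (lambdaOfEntries c A B D).2.2 = -(1 / 2) * log ((A * B - D ^ 2) / (1 - c ^ 2)) := by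
  obtain ⟨hA', hB', hD'⟩ := entries_lambdaOfEntries (A := A) (B := B) (D := D) hs
  rw [Pc, hA', hB', hD']

theorem inner_lambdaOfEntries (hs : 0 < 1 - c ^ 2) (x1 x2 x3 : ℝ) :
    (lambdaOfEntries c A B D).1 * x1 + (lambdaOfEntries c A B D).2.1 * x2 +
        (lambdaOfEntries c A B D).2.2 * x3 =
      ((x1 + x2 - 2 * c * x3) - (A * x1 + B * x2 - 2 * D * x3)) / (2 * (1 - c ^ 2)) := by
  simp only [lambdaOfEntries]
  field_simp
  ring

end Reparametrization

theorem iSup_legendre_Pc_eq_top_of_quadForm_nonpos {c x1 x2 x3 p q : ℝ} (hs : 0 < 1 - c ^ 2)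
    (hpq : 0 < p ^ 2 + q ^ 2) (hX : x1 * p ^ 2 + x2 * q ^ 2 - 2 * x3 * p * q ≤ 0) :
    (⨆ l ∈ {l : ℝ × ℝ × ℝ | Dc c l.1 l.2.1 l.2.2},
        ((l.1 * x1 + l.2.1 * x2 + l.2.2 * x3 - Pc c l.1 l.2.1 l.2.2 : ℝ) : EReal)) = ⊤ := by
  set γ : ℝ → ℝ × ℝ × ℝ := fun t => lambdaOfEntries c (1 + t * p ^ 2) (1 + t * q ^ 2) (t * p * q)
  have hdet (t : ℝ) :
      (1 + t * p ^ 2) * (1 + t * q ^ 2) - (t * p * q) ^ 2 = 1 + t * (p ^ 2 + q ^ 2) := by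
    ring
  have hlower : ∀ᶠ t in atTop,
      -c * x3 / (1 - c ^ 2) + 1 / 2 * log ((1 + t * (p ^ 2 + q ^ 2)) / (1 - c ^ 2)) ≤
        (γ t).1 * x1 + (γ t).2.1 * x2 + (γ t).2.2 * x3 - Pc c (γ t).1 (γ t).2.1 (γ t).2.2 := by
    filter_upwards [eventually_ge_atTop 0] with t ht
    rw [inner_lambdaOfEntries hs, pc_lambdaOfEntries hs, hdet]
    have : 0 ≤ -t * (x1 * p ^ 2 + x2 * q ^ 2 - 2 * x3 * p * q) / (2 * (1 - c ^ 2)) := by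
      apply div_nonneg (by nlinarith) (by linarith)
    rw [← sub_nonneg]
    convert this using 1
    field_simp
    ring
  have hlog : Tendsto
      (fun t => -c * x3 / (1 - c ^ 2) + 1 / 2 * log ((1 + t * (p ^ 2 + q ^ 2)) / (1 - c ^ 2)))
      atTop atTop := by
    refine tendsto_atTop_add_const_left _ _ (.const_mul_atTop one_half_pos ?_)
    refine tendsto_log_atTop.comp (.atTop_div_const hs ?_)
    exact tendsto_atTop_add_const_left _ _ (tendsto_id.atTop_mul_const hpq)
  refine EReal.iSup_mem_coe_eq_top_of_tendsto γ ?_ (tendsto_atTop_mono' _ hlower hlog)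
  filter_upwards [eventually_ge_atTop 0] with t ht
  refine dc_lambdaOfEntries hs (by positivity) (by positivity) ?_
  nlinarith [hdet t]

/-- For `c ∈ (-1,1)` and `x = (x₁,x₂,x₃)` such that the conditions `x₁ > 0`, `x₂ > 0`,
`x₁ x₂ > x₃²` do not all hold, the Legendre transform of `P_c` at `x`, i.e.
`sup_{λ ∈ D_c} (⟨λ,x⟩ - P_c(λ))`, is `+∞`. -/
theorem legendre_transform_Pc_of_not_mem
    (c : ℝ) (hc : c ∈ Set.Ioo (-1 : ℝ) 1)
    (x1 x2 x3 : ℝ) (hx : ¬ (0 < x1 ∧ 0 < x2 ∧ x3 ^ 2 < x1 * x2)) :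
    (⨆ l ∈ {l : ℝ × ℝ × ℝ | Dc c l.1 l.2.1 l.2.2},
        ((l.1 * x1 + l.2.1 * x2 + l.2.2 * x3 - Pc c l.1 l.2.1 l.2.2 : ℝ) : EReal))
      = ⊤ := by
  obtain ⟨p, q, hpq, hX⟩ := exists_ne_zero_quadForm_nonpos hx
  exact iSup_legendre_Pc_eq_top_of_quadForm_nonpos (one_sub_sq_pos_of_mem_Ioo hc) hpq hX
end
end
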